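/- arXiv:2005.11553 — 5 statements merged into one kernel-verified Lean document; each statement's English description precedes it below -/
import Mathlib

section
/- If G is extremely primitive of rank r, then there exist non-negative integers a₁,…,a_k with a₁+⋯+a_k = r−1 and a₁n₁+⋯+a_kn_k = |Ω|−1. Consequently, if no such k-tuple of non-negative integers exists, then G is not extremely primitive. -/
/-!
Since `H` fixes `α`, `{α}` is an `H`-orbit. For `β` in any of the other `r - 1` orbits,
`H_β` is maximal (extreme primitivity) and core-free (faithfulness on orbits), hence
`H`-conjugate to some `M i`, so the orbit of `β` has length `|H : H_β| = n i`. Letting `a i`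
count the nontrivial orbits assigned to `M i`, the orbit decomposition
`|Ω| = 1 + ∑ |H : H_β|` becomes `|Ω| - 1 = ∑ a i * n i`.
-/

open Finset

theorem Finset.exists_sum_mul_eq_sum_of_forall_mem_range {ι κ : Type*} [Fintype κ]
    (s : Finset ι) (w : ι → ℕ) (n : κ → ℕ) (h : ∀ x ∈ s, w x ∈ Set.range n) :
    ∃ a : κ → ℕ, ∑ i, a i = #s ∧ ∑ i, a i * n i = ∑ x ∈ s, w x := by
  classical
  choose c hc using fun x : s => h x x.2
  refine ⟨fun i => #{x ∈ s.attach | c x = i}, ?_, ?_⟩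
  · rw [← card_attach (s := s), card_eq_sum_card_fiberwise (fun x _ => mem_univ (c x))]
  · calc ∑ i, #{x ∈ s.attach | c x = i} * n i
        = ∑ i, ∑ x ∈ s.attach with c x = i, n (c x) := by
          refine sum_congr rfl fun i _ => ?_
          rw [sum_congr rfl fun x hx => congrArg n (mem_filter.1 hx).2, sum_const, smul_eq_mul]
      _ = ∑ x ∈ s.attach, n (c x) := sum_fiberwise _ _ _
      _ = ∑ x ∈ s, w x := by
          rw [← sum_attach s w]
          exact sum_congr rfl fun x _ => hc x

namespace MulAction

variable {H Ω : Type*} [Group H] [MulAction H Ω] [Fintype Ω]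

variable (H) in
theorem card_eq_sum_index_stabilizer [Fintype (orbitRel.Quotient H Ω)] :
    Fintype.card Ω = ∑ q : orbitRel.Quotient H Ω, (stabilizer H q.out).index := by
  classical
  rw [Fintype.card_congr (selfEquivSigmaOrbits H Ω), Fintype.card_sigma]
  refine sum_congr rfl fun q _ => ?_
  rw [index_stabilizer, Set.ncard_eq_toFinset_card', Set.toFinset_card]

theorem card_eq_one_add_sum_index_stabilizer_of_fixed [Fintype (orbitRel.Quotient H Ω)]
    [DecidableEq (orbitRel.Quotient H Ω)] {α : Ω} (hα : ∀ h : H, h • α = α) :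
    Fintype.card Ω = 1 + ∑ q ∈ univ.erase (Quotient.mk _ α : orbitRel.Quotient H Ω),
      (stabilizer H q.out).index := by
  have hout : (Quotient.mk _ α : orbitRel.Quotient H Ω).out = α := by
    obtain ⟨h, hh⟩ := (orbitRel_apply (G := H)).1 <| Quotient.exact <|
      Quotient.out_eq (Quotient.mk _ α)
    exact hh ▸ hα h
  rw [card_eq_sum_index_stabilizer H, ← add_sum_erase _ _ (mem_univ _), hout,
    (stabilizer H α).eq_top_iff'.2 hα, Subgroup.index_top]

end MulAction

theorem stmt_1_general {G Ω : Type*} [Group G] [MulAction G Ω] [Fintype Ω]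
    (α : Ω) (H : Subgroup G) (hH : H = MulAction.stabilizer G α)
    (horbfaith : ∀ β : Ω, β ≠ α → (MulAction.stabilizer H β).normalCore = ⊥)
    (k : ℕ) (M : Fin k → Subgroup H)
    (hrep : ∀ N : Subgroup H, IsCoatom N → N.normalCore = ⊥ →
      ∃ (i : Fin k) (h : H), N = (M i).map (MulAut.conj h).toMonoidHom)
    (n : Fin k → ℕ) (hn : ∀ i, n i = (M i).index)
    (r : ℕ) (hr : r = Nat.card (Quotient (MulAction.orbitRel H Ω)))
    (hEP : ∀ β : Ω, β ≠ α → IsCoatom (MulAction.stabilizer H β)) :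
    ∃ a : Fin k → ℕ, (∑ i, a i) = r - 1 ∧ (∑ i, a i * n i) = Fintype.card Ω - 1 := by
  classical
  have hfixed (h : H) : h • α = α := (hH ▸ h.2 : (h : G) ∈ MulAction.stabilizer G α)
  set s := univ.erase (Quotient.mk _ α : MulAction.orbitRel.Quotient H Ω)
  have hindex : ∀ q ∈ s, (MulAction.stabilizer H q.out).index ∈ Set.range n := by
    intro q hq
    have hβ : q.out ≠ α := fun h => (mem_erase.1 hq).1 (by rw [← h, Quotient.out_eq])
    obtain ⟨i, h, hi⟩ := hrep _ (hEP _ hβ) (horbfaith _ hβ)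
    exact ⟨i, hi ▸ hn i ▸ ((M i).index_map_equiv (MulAut.conj h)).symm⟩
  obtain ⟨a, hcard, hsum⟩ := s.exists_sum_mul_eq_sum_of_forall_mem_range _ n hindex
  refine ⟨a, ?_, ?_⟩
  · rw [hcard, card_erase_of_mem (mem_univ _), card_univ, hr, Nat.card_eq_fintype_card]
  · rw [hsum, MulAction.card_eq_one_add_sum_index_stabilizer_of_fixed hfixed,
      add_tsub_cancel_left]

/-- Let `G` act faithfully and transitively on a finite set `Ω` with nontrivial point
stabilizer `H = G_α` acting faithfully on each of its orbits in `Ω \ {α}` (i.e. the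
normal core of each stabilizer `H_β`, `β ≠ α`, is trivial).  Let `M 1, …, M k` be
representatives of the `H`-classes of core-free maximal subgroups of `H`, with indices
`n i = |H : M i|`, and let `r` be the rank of `G` (the number of `H`-orbits on `Ω`).
If `G` is extremely primitive, then there are non-negative integers `a i` with
`∑ a i = r - 1` and `∑ a i * n i = |Ω| - 1`. -/
theorem stmt_1 {G Ω : Type*} [Group G] [Fintype G] [MulAction G Ω] [Fintype Ω]
    (hfaith : ∀ g : G, (∀ ω : Ω, g • ω = ω) → g = 1)
    (htrans : MulAction.IsPretransitive G Ω)
    (α : Ω) (H : Subgroup G) (hH : H = MulAction.stabilizer G α) (hne : H ≠ ⊥)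
    (horbfaith : ∀ β : Ω, β ≠ α → (MulAction.stabilizer H β).normalCore = ⊥)
    (k : ℕ) (M : Fin k → Subgroup H)
    (hM : ∀ i, IsCoatom (M i) ∧ (M i).normalCore = ⊥)
    (hrep : ∀ N : Subgroup H, IsCoatom N → N.normalCore = ⊥ →
      ∃ (i : Fin k) (h : H), N = (M i).map (MulAut.conj h).toMonoidHom)
    (n : Fin k → ℕ) (hn : ∀ i, n i = (M i).index)
    (r : ℕ) (hr : r = Nat.card (Quotient (MulAction.orbitRel H Ω)))
    (hEP : ∀ β : Ω, β ≠ α → IsCoatom (MulAction.stabilizer H β)) :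
    ∃ a : Fin k → ℕ, (∑ i, a i) = r - 1 ∧ (∑ i, a i * n i) = Fintype.card Ω - 1 :=
  stmt_1_general α H hH horbfaith k M hrep n hn r hr hEP
end

section
/- Under hypotheses (i), (ii), (iii), the subgroup H ∩ gHg⁻¹ is a proper, non-maximal subgroup of H. -/
/-!
Write `D = H ⊓ gHg⁻¹`. Since `G₀` is normal, `D ⊓ G₀ = H₀ ⊓ gH₀g⁻¹ =: A`. By (iii) no `M ∈ 𝓜`
lies in `gH₀g⁻¹`; in particular `A < H₀`, which also forces `D < H`. As `A` contains
`K = gKg⁻¹`, it lies in some `M ∈ 𝓜`. Then `D < M ⊔ D`, since `M ≤ D` would give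
`M ≤ A ≤ gH₀g⁻¹`. Since `H` normalizes `M` by (ii), `M ⊔ D = MD`, and Dedekind's modular law
gives `(M ⊔ D) ⊓ G₀ = M ⊔ A = M < H₀`, so `M ⊔ D < H`.
-/

namespace Subgroup

variable {G : Type*} [Group G]

theorem map_conj_inv_le_iff (S T : Subgroup G) (g : G) :
    S.map (MulAut.conj g⁻¹).toMonoidHom ≤ T ↔ S ≤ T.map (MulAut.conj g).toMonoidHom := by
  rw [map_le_iff_le_comap, comap_equiv_eq_map_symm', map_inv, MulAut.inv_def, MulEquiv.symm_symm]

theorem sup_inf_eq_of_le_normalizer {M D N : Subgroup G} (hMN : M ≤ N)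
    (hD : D ≤ normalizer (M : Set G)) : (M ⊔ D) ⊓ N = M ⊔ D ⊓ N := by
  apply SetLike.coe_injective
  rw [coe_inf, coe_mul_of_right_le_normalizer_left M D hD,
    coe_mul_of_right_le_normalizer_left M (D ⊓ N) (inf_le_left.trans hD), mul_inf_assoc M D N hMN]

theorem exists_maximal_between [Finite G] {A B : Subgroup G} (h : A < B) :
    ∃ M, A ≤ M ∧ M < B ∧ ∀ L : Subgroup G, M < L → L ≤ B → L = B := by
  obtain ⟨M, hAM, hM⟩ := Finite.exists_le_maximal (p := fun M => A ≤ M ∧ M < B) ⟨le_rfl, h⟩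
  refine ⟨M, hAM, hM.prop.2, fun L hML hLB => ?_⟩
  by_contra hne
  exact hML.not_ge (hM.le_of_ge ⟨hAM.trans hML.le, hLB.lt_of_ne hne⟩ hML.le)

end Subgroup

open Subgroup in
theorem stmt_2_general {G : Type*} [Group G] [Finite G]
    (G₀ H : Subgroup G) [G₀.Normal]
    (H₀ : Subgroup G) (hH₀ : H₀ = H ⊓ G₀)
    (K : Subgroup G) (hKlt : K < H₀)
    (𝓜 : Set (Subgroup G))
    (h𝓜 : 𝓜 = {M | K ≤ M ∧ M < H₀ ∧ ∀ L : Subgroup G, M < L → L ≤ H₀ → L = H₀})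
    (h𝓜ne : 𝓜.Nonempty)
    (hMstable : ∀ M ∈ 𝓜, ∀ h ∈ H, M.map (MulAut.conj h).toMonoidHom = M)
    (g : G)
    (hgK : K.map (MulAut.conj g⁻¹).toMonoidHom = K)
    (hgM : ∀ M ∈ 𝓜, ¬ (M.map (MulAut.conj g⁻¹).toMonoidHom ≤ H₀)) :
    H ⊓ H.map (MulAut.conj g).toMonoidHom < H ∧
      ∃ L : Subgroup G, H ⊓ H.map (MulAut.conj g).toMonoidHom < L ∧ L < H := by
  simp only [map_conj_inv_le_iff] at hgM
  set c := (MulAut.conj g).toMonoidHom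
  set D := H ⊓ H.map c
  set A := H₀ ⊓ H₀.map c
  have hH₀c : H₀.map c = H.map c ⊓ G₀ := by
    have hG₀c : G₀.map c = G₀ := Normal.map_conj_eq G₀ g
    rw [hH₀, map_inf_eq _ _ _ (MulAut.conj g).injective, hG₀c]
  have hDA : D ⊓ G₀ = A := by
    change H ⊓ H.map c ⊓ G₀ = H₀ ⊓ H₀.map c
    rw [hH₀c, hH₀, inf_inf_inf_comm, inf_idem]
  have hA : A < H₀ := by
    refine inf_le_left.lt_of_ne fun hAH₀ => ?_
    obtain ⟨M₀, hM₀⟩ := h𝓜ne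
    exact hgM M₀ hM₀ (((h𝓜 ▸ hM₀).2.1.le.trans hAH₀.ge).trans inf_le_right)
  have hKA : K ≤ A :=
    le_inf hKlt.le (((map_conj_inv_le_iff K K g).mp hgK.le).trans (map_mono hKlt.le))
  obtain ⟨M, hAM, hMH₀, hMmax⟩ := exists_maximal_between hA
  have hM : M ∈ 𝓜 := h𝓜 ▸ ⟨hKA.trans hAM, hMH₀, hMmax⟩
  have hMG₀ : M ≤ G₀ := hMH₀.le.trans (hH₀ ▸ inf_le_right)
  have hMH : M ≤ H := hMH₀.le.trans (hH₀ ▸ inf_le_left)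
  refine ⟨inf_le_left.lt_of_ne fun hDH => ?_, M ⊔ D, le_sup_right.lt_of_ne fun hMD => ?_,
    (sup_le hMH inf_le_left).lt_of_ne fun hMDH => ?_⟩
  · refine hA.ne (le_antisymm inf_le_left (le_inf le_rfl ?_))
    rw [hH₀c, hH₀]
    exact inf_le_inf_right G₀ (hDH.ge.trans inf_le_right)
  · exact hgM M hM ((le_inf (le_sup_left.trans hMD.ge) hMG₀).trans (hDA.le.trans inf_le_right))
  · have hDnorm : D ≤ normalizer (M : Set G) := fun d hd =>
      mem_normalizer_iff_map_conj_eq.mpr (hMstable M hM d hd.1)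
    refine hMH₀.ne (le_antisymm hMH₀.le ?_)
    rw [hH₀, ← hMDH, sup_inf_eq_of_le_normalizer hMG₀ hDnorm, hDA]
    exact sup_le le_rfl hAM

/-- Let `G` be a finite group, `G₀ ⊴ G`, `H ≤ G`, `H₀ = H ⊓ G₀`, and let `K < H₀`
be a proper subgroup normalized by `H`.  Let `𝓜` be the (nonempty) set of maximal
subgroups of `H₀` containing `K`.  Assume (i) `H₀` is maximal in `G₀`; (ii) every
`M ∈ 𝓜` is normalized by `H`; (iii) there is `g ∈ G₀` with `g⁻¹Kg = K` and
`g⁻¹Mg ⊄ H₀` for all `M ∈ 𝓜`.  Then `H ∩ gHg⁻¹` is a proper non-maximal subgroup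
of `H`. -/
theorem stmt_2 {G : Type*} [Group G] [Finite G]
    (G₀ H : Subgroup G) [G₀.Normal]
    (H₀ : Subgroup G) (hH₀ : H₀ = H ⊓ G₀)
    (K : Subgroup G) (hKlt : K < H₀)
    (hKnorm : ∀ h ∈ H, K.map (MulAut.conj h).toMonoidHom = K)
    (𝓜 : Set (Subgroup G))
    (h𝓜 : 𝓜 = {M | K ≤ M ∧ M < H₀ ∧ ∀ L : Subgroup G, M < L → L ≤ H₀ → L = H₀})
    (h𝓜ne : 𝓜.Nonempty)
    (hmax : H₀ < G₀ ∧ ∀ L : Subgroup G, H₀ < L → L ≤ G₀ → L = G₀)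
    (hMstable : ∀ M ∈ 𝓜, ∀ h ∈ H, M.map (MulAut.conj h).toMonoidHom = M)
    (g : G) (hg : g ∈ G₀)
    (hgK : K.map (MulAut.conj g⁻¹).toMonoidHom = K)
    (hgM : ∀ M ∈ 𝓜, ¬ (M.map (MulAut.conj g⁻¹).toMonoidHom ≤ H₀)) :
    H ⊓ H.map (MulAut.conj g).toMonoidHom < H ∧
      ∃ L : Subgroup G, H ⊓ H.map (MulAut.conj g).toMonoidHom < L ∧ L < H :=
  stmt_2_general G₀ H H₀ hH₀ K hKlt 𝓜 h𝓜 h𝓜ne hMstable g hgK hgM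
end

section
/- If 𝒬(G,H) = Σᵢ |xᵢ^G| · (|xᵢ^G ∩ H| / |xᵢ^G|)² < 1, then there exists x ∈ G with H ∩ x⁻¹Hx = 1; equivalently, the base size b(G,H) of the action of G on G/H equals 2 (assuming H ≠ 1). -/
/-!
If `H ∩ Hᵍ ≠ 1` for every `g`, then `H ∩ Hᵍ` contains an element `z` of prime order, so every
`g` lies in one of the sets `{g | g z g⁻¹ ∈ H}` with `z ∈ H` of prime order. By orbit–stabilizer,
for `z ∈ xᵢᴳ` this set has `|G| · |xᵢᴳ ∩ H| / |xᵢᴳ|` elements, and summing over the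
`|xᵢᴳ ∩ H|` choices of `z` in each class bounds `|G|` by `|G| · 𝒬(G,H) < |G|`.
-/

open MulAction

theorem MulAction.card_orbit_mul_card_smul_mem {G α : Type*} [Group G] [MulAction G α]
    (a : α) (S : Set α) :
    Nat.card (orbit G a) * Nat.card {g : G | g • a ∈ S} =
      Nat.card G * Nat.card ↥(orbit G a ∩ S) := by
  let e : G ≃ orbit G a × stabilizer G a :=
    Subgroup.groupEquivQuotientProdSubgroup.trans
      ((orbitEquivQuotientStabilizer G a).symm.prodCongr (Equiv.refl _))
  have hG : Nat.card G = Nat.card (orbit G a) * Nat.card (stabilizer G a) := by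
    rw [Nat.card_congr e, Nat.card_prod]
  have hS : Nat.card {g : G | g • a ∈ S} =
      Nat.card ↥(orbit G a ∩ S) * Nat.card (stabilizer G a) := by
    rw [← Nat.card_prod]
    exact Nat.card_congr ((e.subtypeEquiv fun _ => Iff.rfl).trans
      (Equiv.prodSubtypeFstEquivSubtypeProd.trans
        ((Equiv.subtypeSubtypeEquivSubtypeInter _ (· ∈ S)).prodCongr (Equiv.refl _))))
  rw [hG, hS]
  ring

theorem card_setOf_isConj_mul_card_conj_mem {G : Type*} [Group G] (z : G) (S : Set G) :
    Nat.card {y | IsConj z y} * Nat.card {g : G | g * z * g⁻¹ ∈ S} =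
      Nat.card G * Nat.card ↥({y | IsConj z y} ∩ S) := by
  have horbit : orbit (ConjAct G) z = {y | IsConj z y} := by
    ext y
    exact ConjAct.mem_orbit_conjAct.trans isConj_comm
  have hconj : Nat.card {g : ConjAct G | g • z ∈ S} = Nat.card {g : G | g * z * g⁻¹ ∈ S} :=
    Nat.card_congr (ConjAct.ofConjAct.toEquiv.subtypeEquiv fun _ => Iff.rfl)
  have := card_orbit_mul_card_smul_mem (G := ConjAct G) z S
  rwa [horbit, hconj, Nat.card_congr ConjAct.ofConjAct.toEquiv] at this

theorem card_setOf_isConj_pos {G : Type*} [Group G] [Finite G] (x : G) :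
    0 < Nat.card {y | IsConj x y} :=
  Nat.card_pos_iff.2 ⟨⟨⟨x, IsConj.refl x⟩⟩, inferInstance⟩

theorem card_conj_mem_eq_of_isConj {G : Type*} [Group G] [Finite G] {x z : G}
    (hxz : IsConj x z) (S : Set G) :
    (Nat.card {g : G | g * z * g⁻¹ ∈ S} : ℝ) =
      Nat.card G * Nat.card ↥({y | IsConj x y} ∩ S) / Nat.card {y | IsConj x y} := by
  have hclass : {y | IsConj z y} = {y | IsConj x y} := by
    ext y
    exact ⟨hxz.trans, hxz.symm.trans⟩
  have hpos : (0 : ℝ) < Nat.card {y | IsConj x y} := by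
    exact_mod_cast card_setOf_isConj_pos x
  have := card_setOf_isConj_mul_card_conj_mem z S
  rw [hclass] at this
  rw [eq_div_iff hpos.ne', mul_comm]
  exact_mod_cast this

theorem sum_card_conj_mem {G : Type*} [Group G] [Finite G] (x : G) (S : Set G)
    [Fintype ↥({y | IsConj x y} ∩ S)] :
    ∑ z : ↥({y | IsConj x y} ∩ S), (Nat.card {g : G | g * z * g⁻¹ ∈ S} : ℝ) =
      Nat.card G * (Nat.card {y | IsConj x y} *
        (Nat.card ↥({y | IsConj x y} ∩ S) / Nat.card {y | IsConj x y}) ^ 2) := by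
  have hpos : (0 : ℝ) < Nat.card {y | IsConj x y} := by
    exact_mod_cast card_setOf_isConj_pos x
  rw [Finset.sum_congr rfl fun z _ => card_conj_mem_eq_of_isConj z.2.1 S, Finset.sum_const,
    Finset.card_univ, ← Nat.card_eq_fintype_card, nsmul_eq_mul]
  field_simp

theorem Nat.card_le_sum_card_of_forall_exists_mem {α ι : Type*} [Finite α] [Fintype ι]
    (s : ι → Set α) (h : ∀ a, ∃ i, a ∈ s i) : Nat.card α ≤ ∑ i, Nat.card (s i) := by
  have hunion : ⋃ i, s i = Set.univ := Set.eq_univ_of_forall fun a => Set.mem_iUnion.2 (h a)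
  simpa [hunion, Set.ncard_univ] using Set.ncard_iUnion_le_of_fintype s

theorem Subgroup.exists_prime_orderOf_mem_of_ne_bot {G : Type*} [Group G] {K : Subgroup G}
    [Finite K] (hK : K ≠ ⊥) : ∃ z ∈ K, (orderOf z).Prime := by
  have hp : (Nat.card K).minFac.Prime :=
    Nat.minFac_prime (K.one_lt_card_iff_ne_bot.mpr hK).ne'
  have : Fact (Nat.card K).minFac.Prime := ⟨hp⟩
  obtain ⟨z, hz⟩ := exists_prime_orderOf_dvd_card' (G := K) _ (Nat.minFac_dvd _)
  exact ⟨z, z.2, by rwa [Subgroup.orderOf_coe, hz]⟩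

theorem stmt_4_general {G : Type*} [Group G] [Fintype G] (H : Subgroup G)
    (k : ℕ) (x : Fin k → G)
    (hrep : ∀ g : G, (orderOf g).Prime → (∃ h ∈ H, IsConj g h) → ∃ i, IsConj g (x i))
    (hQ : ∑ i, (Nat.card ↥{y : G | IsConj (x i) y} : ℝ) *
        ((Nat.card ↥({y : G | IsConj (x i) y} ∩ (H : Set G)) : ℝ) /
          (Nat.card ↥{y : G | IsConj (x i) y} : ℝ)) ^ 2 < 1) :
    ∃ g : G, H ⊓ H.comap (MulAut.conj g).toMonoidHom = ⊥ := by
  classical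
  by_contra! hnontriv
  have hcover : ∀ g : G, ∃ p : Σ i, ↥({y | IsConj (x i) y} ∩ (H : Set G)),
      g ∈ {g : G | g * p.2 * g⁻¹ ∈ H} := by
    intro g
    obtain ⟨z, ⟨hzH, hgzH⟩, hz⟩ := Subgroup.exists_prime_orderOf_mem_of_ne_bot (hnontriv g)
    obtain ⟨i, hi⟩ := hrep z hz ⟨z, hzH, IsConj.refl z⟩
    exact ⟨⟨i, z, hi.symm, hzH⟩, hgzH⟩
  have hG : (0 : ℝ) < Nat.card G := by exact_mod_cast Nat.card_pos
  have hlt : (Nat.card G : ℝ) < Nat.card G := by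
    calc (Nat.card G : ℝ)
        ≤ ∑ p : Σ i, ↥({y | IsConj (x i) y} ∩ (H : Set G)),
            (Nat.card {g : G | g * p.2 * g⁻¹ ∈ H} : ℝ) := by
          exact_mod_cast Nat.card_le_sum_card_of_forall_exists_mem _ hcover
      _ = Nat.card G * ∑ i, (Nat.card ↥{y : G | IsConj (x i) y} : ℝ) *
            ((Nat.card ↥({y : G | IsConj (x i) y} ∩ (H : Set G)) : ℝ) /
              (Nat.card ↥{y : G | IsConj (x i) y} : ℝ)) ^ 2 := by
          rw [Fintype.sum_sigma, Finset.mul_sum]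
          exact Finset.sum_congr rfl fun i _ => sum_card_conj_mem (x i) H
      _ < Nat.card G * 1 := by gcongr
      _ = Nat.card G := mul_one _
  exact lt_irrefl _ hlt

/-- Let `G` be a finite group and `H` a proper nontrivial subgroup, and let
`x 1, …, x k` be representatives of the distinct `G`-conjugacy classes of prime order
elements of `G` meeting `H`.  If `𝒬(G,H) = ∑ i |xᵢ^G| · (|xᵢ^G ∩ H|/|xᵢ^G|)² < 1`
then there exists `x ∈ G` with `H ∩ x⁻¹Hx = 1` (i.e. the base size of `G` acting on
`G/H` is `2`). -/
theorem stmt_4 {G : Type*} [Group G] [Fintype G] (H : Subgroup G)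
    (hne : H ≠ ⊥) (hproper : H ≠ ⊤)
    (k : ℕ) (x : Fin k → G)
    (hord : ∀ i, (orderOf (x i)).Prime)
    (hmeet : ∀ i, ∃ h ∈ H, IsConj (x i) h)
    (hdist : ∀ i j, i ≠ j → ¬ IsConj (x i) (x j))
    (hrep : ∀ g : G, (orderOf g).Prime → (∃ h ∈ H, IsConj g h) → ∃ i, IsConj g (x i))
    (hQ : ∑ i, (Nat.card ↥{y : G | IsConj (x i) y} : ℝ) *
        ((Nat.card ↥({y : G | IsConj (x i) y} ∩ (H : Set G)) : ℝ) /
          (Nat.card ↥{y : G | IsConj (x i) y} : ℝ)) ^ 2 < 1) :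
    ∃ g : G, H ⊓ H.comap (MulAut.conj g).toMonoidHom = ⊥ :=
  stmt_4_general H k x hrep hQ
end

section
/- If g normalizes M (i.e., g⁻¹Mg = M), then g ∈ K. -/
/-!
Conjugating `x` by `g` stays in `M`, and since `x` inverts `g` the commutator `⁅g, x⁆` equals
`g ^ 2`; so `g ^ 2 ∈ M`, and then `g ^ 2 ∈ K` because `K` has index `2` in `M`. As `g` has odd
order, it is a power of `g ^ 2`.
-/

open scoped commutatorElement in
theorem commutatorElement_eq_sq_of_inv_mul_mul_eq_inv {G : Type*} [Group G] {g x : G}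
    (h : x⁻¹ * g * x = g⁻¹) : ⁅g, x⁆ = g ^ 2 := by
  have hg : x * g⁻¹ * x⁻¹ = g := by rw [← h]; group
  calc ⁅g, x⁆ = g * (x * g⁻¹ * x⁻¹) := by rw [commutatorElement_def]; group
    _ = g ^ 2 := by rw [hg, pow_two]

namespace Subgroup

variable {G : Type*} [Group G]

theorem conj_mem_of_map_conj_inv_eq {H : Subgroup G} {g : G}
    (h : H.map (MulAut.conj g⁻¹).toMonoidHom = H) {x : G} (hx : x ∈ H) : g * x * g⁻¹ ∈ H := by
  rw [← h] at hx
  obtain ⟨y, hy, rfl⟩ := hx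
  simpa [mul_assoc] using hy

theorem mem_of_sq_mem_of_odd_orderOf {H : Subgroup G} {g : G} (hodd : Odd (orderOf g))
    (h : g ^ 2 ∈ H) : g ∈ H :=
  H.zpowers_le.mpr h (mem_zpowers_pow_iff.mpr (Nat.coprime_two_left.mpr hodd))

theorem sq_mem_of_relIndex_eq_two {H K : Subgroup G} (h : H.relIndex K = 2) {a : G}
    (ha : a ∈ K) : a ^ 2 ∈ H := by
  simpa [mem_subgroupOf] using sq_mem_of_index_two h ⟨a, ha⟩

end Subgroup

theorem stmt_15_general {G : Type*} [Group G] (M K : Subgroup G)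
    (hindex : K.relIndex M = 2)
    (x : G) (hx : x ∈ M) (g : G)
    (hodd : Odd (orderOf g))
    (hconj : x⁻¹ * g * x = g⁻¹)
    (hgM : M.map (MulAut.conj g⁻¹).toMonoidHom = M) :
    g ∈ K := by
  have hgxg : g * x * g⁻¹ ∈ M := M.conj_mem_of_map_conj_inv_eq hgM hx
  have hg2M : g ^ 2 ∈ M := by
    rw [← commutatorElement_eq_sq_of_inv_mul_mul_eq_inv hconj, commutatorElement_def]
    exact M.mul_mem hgxg (M.inv_mem hx)
  have hg : g ∈ M := M.mem_of_sq_mem_of_odd_orderOf hodd hg2M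
  exact K.mem_of_sq_mem_of_odd_orderOf hodd (K.sq_mem_of_relIndex_eq_two hindex hg)

/-- Let `G` be a group, `M ≤ G` with a normal subgroup `K ⊴ M` of index `2`, let
`x ∈ M`, and let `g ∈ G` have finite odd order with `x⁻¹gx = g⁻¹`.  If `g` normalizes
`M` (i.e. `g⁻¹Mg = M`), then `g ∈ K`. -/
theorem stmt_15 {G : Type*} [Group G] (M K : Subgroup G) (hKM : K ≤ M)
    (hnorm : ∀ m ∈ M, ∀ k ∈ K, m * k * m⁻¹ ∈ K)
    (hindex : K.relIndex M = 2)
    (x : G) (hx : x ∈ M) (g : G)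
    (hodd : Odd (orderOf g))
    (hconj : x⁻¹ * g * x = g⁻¹)
    (hgM : M.map (MulAut.conj g⁻¹).toMonoidHom = M) :
    g ∈ K :=
  stmt_15_general M K hindex x hx g hodd hconj hgM
end

section
/- If g ∈ H and K ≤ g⁻¹Mg, then g ∈ M and hence g⁻¹Mg = M; in other words, M is the unique H-conjugate of M containing K. -/
/-!
Since `gKg⁻¹ ≤ M`, hypothesis (b) gives `m ∈ M` with `m⁻¹g` normalizing `K`; by (a) `m⁻¹g ∈ M`,
so `g ∈ M`, and an element of `M` conjugates `M` to itself.
-/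

namespace Subgroup

variable {G : Type*} [Group G]

theorem le_map_conj_inv_iff {K M : Subgroup G} {g : G} :
    K ≤ M.map (MulAut.conj g⁻¹).toMonoidHom ↔ K.map (MulAut.conj g).toMonoidHom ≤ M := by
  change K ≤ M.map (MulAut.conj g⁻¹ : G →* G) ↔ _
  rw [map_le_iff_le_comap, map_equiv_eq_comap_symm, map_inv, MulAut.inv_symm]
  rfl

theorem map_conj_map_conj (K : Subgroup G) (a b : G) :
    (K.map (MulAut.conj a).toMonoidHom).map (MulAut.conj b).toMonoidHom
      = K.map (MulAut.conj (b * a)).toMonoidHom := by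
  rw [map_map, map_mul, MulAut.mul_def]
  rfl

theorem mem_of_map_conj_eq {M K : Subgroup G} (hNM : normalizer (K : Set G) ≤ M) {g m : G}
    (hm : m ∈ M)
    (hK : (K.map (MulAut.conj g).toMonoidHom).map (MulAut.conj m⁻¹).toMonoidHom = K) :
    g ∈ M := by
  rw [map_conj_map_conj] at hK
  have hmg : m⁻¹ * g ∈ M := hNM (mem_normalizer_iff_map_conj_eq.mpr hK)
  simpa using M.mul_mem hm hmg

theorem map_conj_eq_self_of_mem {M : Subgroup G} {g : G} (hg : g ∈ M) :
    M.map (MulAut.conj g).toMonoidHom = M :=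
  mem_normalizer_iff_map_conj_eq.mp (le_normalizer hg)

end Subgroup

theorem stmt_16_general {H : Type*} [Group H] (M K : Subgroup H)
    (ha : Subgroup.normalizer (K : Set H) ≤ M)
    (hb : ∀ h : H, K.map (MulAut.conj h⁻¹).toMonoidHom ≤ M →
      ∃ m ∈ M,
        (K.map (MulAut.conj h⁻¹).toMonoidHom).map (MulAut.conj m⁻¹).toMonoidHom = K) :
    ∀ g : H, K ≤ M.map (MulAut.conj g⁻¹).toMonoidHom →
      g ∈ M ∧ M.map (MulAut.conj g⁻¹).toMonoidHom = M := by
  intro g hg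
  obtain ⟨m, hm, hmK⟩ := hb g⁻¹ (by rwa [inv_inv, ← Subgroup.le_map_conj_inv_iff])
  rw [inv_inv] at hmK
  have hgM : g ∈ M := Subgroup.mem_of_map_conj_eq ha hm hmK
  exact ⟨hgM, Subgroup.map_conj_eq_self_of_mem (inv_mem hgM)⟩

/-- Let `H` be a finite group, `M ≤ H` and `K ≤ M`.  Assume (a) `N_H(K) ≤ M`, and
(b) every `H`-conjugate of `K` lying in `M` is `M`-conjugate to `K`.  If `g ∈ H`
and `K ≤ g⁻¹Mg`, then `g ∈ M` and `g⁻¹Mg = M`; that is, `M` is the unique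
`H`-conjugate of `M` containing `K`. -/
theorem stmt_16 {H : Type*} [Group H] [Finite H] (M K : Subgroup H) (hKM : K ≤ M)
    (ha : Subgroup.normalizer (K : Set H) ≤ M)
    (hb : ∀ h : H, K.map (MulAut.conj h⁻¹).toMonoidHom ≤ M →
      ∃ m ∈ M,
        (K.map (MulAut.conj h⁻¹).toMonoidHom).map (MulAut.conj m⁻¹).toMonoidHom = K) :
    ∀ g : H, K ≤ M.map (MulAut.conj g⁻¹).toMonoidHom →
      g ∈ M ∧ M.map (MulAut.conj g⁻¹).toMonoidHom = M :=
  stmt_16_general M K ha hb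
end
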